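/- arXiv:2003.02896 — 2 statements merged into one kernel-verified Lean document; each statement's English description precedes it below -/
import Mathlib

section
/- Let Q(x₁,…,xₙ) = (∑_{j=1}^n x_j^{-1})^{-1} on (0,∞)^n. If x, y ∈ (0,∞)^n with x ≠ y and Q(λx + (1-λ)y) = λQ(x) + (1-λ)Q(y) for some λ ∈ (0,1), then x = μ y for some real μ. -/
/-!
For positive `v` and weights `w` with `∑ w = 1`, the identity
`∑ w_j² v_j - (∑ v_j⁻¹)⁻¹ = ∑ v_j (w_j - v_j⁻¹ / ∑ v_k⁻¹)²` shows that `(∑ v_j⁻¹)⁻¹` is the minimum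
of the linear functionals `v ↦ ∑ w_j² v_j`, attained only at `w = v⁻¹ / ∑ v⁻¹`. Take `w` to be the
minimiser for `z = λx + (1-λ)y`: then `Q(z) = λ ∑ w² x + (1-λ) ∑ w² y ≥ λ Q(x) + (1-λ) Q(y)`, and
equality forces `w` to be the minimiser for `x` and for `y` as well, so `x⁻¹` and `y⁻¹` are
proportional.
-/

open Finset

variable {ι : Type*} [Fintype ι]

theorem sum_inv_pos [Nonempty ι] {v : ι → ℝ} (hv : ∀ j, 0 < v j) : 0 < ∑ j, (v j)⁻¹ :=
  sum_pos (fun j _ => inv_pos.2 (hv j)) univ_nonempty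

theorem sum_inv_div_sum_inv [Nonempty ι] {v : ι → ℝ} (hv : ∀ j, 0 < v j) :
    ∑ j, (v j)⁻¹ / ∑ k, (v k)⁻¹ = 1 := by
  rw [← sum_div, div_self (sum_inv_pos hv).ne']

theorem sum_sq_mul_sub_inv_sum_inv [Nonempty ι] {w v : ι → ℝ} (hw : ∑ j, w j = 1)
    (hv : ∀ j, 0 < v j) :
    ∑ j, w j ^ 2 * v j - (∑ j, (v j)⁻¹)⁻¹
      = ∑ j, v j * (w j - (v j)⁻¹ / ∑ k, (v k)⁻¹) ^ 2 := by
  set S := ∑ k, (v k)⁻¹ with hS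
  have hS0 : S ≠ 0 := (sum_inv_pos hv).ne'
  have expand : ∀ j, v j * (w j - (v j)⁻¹ / S) ^ 2
      = w j ^ 2 * v j - 2 / S * w j + 1 / S ^ 2 * (v j)⁻¹ := fun j => by
    have := (hv j).ne'
    field_simp
    ring
  simp only [expand, sum_add_distrib, sum_sub_distrib, ← mul_sum, hw, ← hS]
  field_simp
  ring

theorem inv_sum_inv_le_sum_sq_mul [Nonempty ι] {w v : ι → ℝ} (hw : ∑ j, w j = 1)
    (hv : ∀ j, 0 < v j) : (∑ j, (v j)⁻¹)⁻¹ ≤ ∑ j, w j ^ 2 * v j := by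
  rw [← sub_nonneg, sum_sq_mul_sub_inv_sum_inv hw hv]
  exact sum_nonneg fun j _ => mul_nonneg (hv j).le (sq_nonneg _)

theorem sum_sq_mul_eq_inv_sum_inv_iff [Nonempty ι] {w v : ι → ℝ} (hw : ∑ j, w j = 1)
    (hv : ∀ j, 0 < v j) :
    ∑ j, w j ^ 2 * v j = (∑ j, (v j)⁻¹)⁻¹ ↔ ∀ j, w j = (v j)⁻¹ / ∑ k, (v k)⁻¹ := by
  rw [← sub_eq_zero, sum_sq_mul_sub_inv_sum_inv hw hv,
    sum_eq_zero_iff_of_nonneg fun j _ => mul_nonneg (hv j).le (sq_nonneg _)]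
  simp only [mem_univ, true_implies, mul_eq_zero, (hv _).ne', false_or, sq_eq_zero_iff,
    sub_eq_zero]

theorem eq_smul_of_inv_div_sum_inv_eq [Nonempty ι] {x y : ι → ℝ} (hx : ∀ j, 0 < x j)
    (hy : ∀ j, 0 < y j)
    (h : ∀ j, (x j)⁻¹ / ∑ k, (x k)⁻¹ = (y j)⁻¹ / ∑ k, (y k)⁻¹) :
    x = ((∑ k, (y k)⁻¹) / ∑ k, (x k)⁻¹) • y := by
  have hSx := (sum_inv_pos hx).ne'
  have hSy := (sum_inv_pos hy).ne'
  funext j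
  have hj := h j
  have := (hx j).ne'
  have := (hy j).ne'
  generalize ∑ k, (x k)⁻¹ = Sx at hSx hj ⊢
  generalize ∑ k, (y k)⁻¹ = Sy at hSy hj ⊢
  rw [Pi.smul_apply, smul_eq_mul]
  field_simp at hj ⊢
  linear_combination -hj

theorem harmonic_mean_equality_case_general (n : ℕ) (hn : 1 ≤ n)
    (x y : Fin n → ℝ) (hx : ∀ j, 0 < x j) (hy : ∀ j, 0 < y j)
    (l : ℝ) (hl : l ∈ Set.Ioo (0 : ℝ) 1)
    (heq : (∑ j, ((l • x + (1 - l) • y) j)⁻¹)⁻¹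
      = l * (∑ j, (x j)⁻¹)⁻¹ + (1 - l) * (∑ j, (y j)⁻¹)⁻¹) :
    ∃ μ : ℝ, x = μ • y := by
  have : Nonempty (Fin n) := ⟨⟨0, hn⟩⟩
  obtain ⟨hl0, hl1⟩ := hl
  set z := l • x + (1 - l) • y
  have hz : ∀ j, 0 < z j := fun j => by
    have := hx j
    have := hy j
    simp only [z, Pi.add_apply, Pi.smul_apply, smul_eq_mul]
    nlinarith
  set w := fun j => (z j)⁻¹ / ∑ k, (z k)⁻¹
  have hw : ∑ j, w j = 1 := sum_inv_div_sum_inv hz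
  have hwz : ∑ j, w j ^ 2 * z j = (∑ j, (z j)⁻¹)⁻¹ :=
    (sum_sq_mul_eq_inv_sum_inv_iff hw hz).2 fun _ => rfl
  have hsplit : ∑ j, w j ^ 2 * z j
      = l * ∑ j, w j ^ 2 * x j + (1 - l) * ∑ j, w j ^ 2 * y j := by
    simp only [z, mul_sum, ← sum_add_distrib, Pi.add_apply, Pi.smul_apply, smul_eq_mul]
    exact sum_congr rfl fun j _ => by ring
  have hx_le := inv_sum_inv_le_sum_sq_mul hw hx
  have hy_le := inv_sum_inv_le_sum_sq_mul hw hy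
  have hwx := (sum_sq_mul_eq_inv_sum_inv_iff hw hx).1 (by nlinarith)
  have hwy := (sum_sq_mul_eq_inv_sum_inv_iff hw hy).1 (by nlinarith)
  exact ⟨_, eq_smul_of_inv_div_sum_inv_eq hx hy fun j => (hwx j).symm.trans (hwy j)⟩

theorem harmonic_mean_equality_case (n : ℕ) (hn : 1 ≤ n)
    (x y : Fin n → ℝ) (hx : ∀ j, 0 < x j) (hy : ∀ j, 0 < y j) (hxy : x ≠ y)
    (l : ℝ) (hl : l ∈ Set.Ioo (0 : ℝ) 1)
    (heq : (∑ j, ((l • x + (1 - l) • y) j)⁻¹)⁻¹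
      = l * (∑ j, (x j)⁻¹)⁻¹ + (1 - l) * (∑ j, (y j)⁻¹)⁻¹) :
    ∃ μ : ℝ, x = μ • y :=
  harmonic_mean_equality_case_general n hn x y hx hy l hl heq
end

section
/- For every y ∈ (0,1), ∫_0^{1/e} y/((t²+y²)·log(1/t)) dt ≤ π/(2(1 + (1/2)log(1/y))) + ∫_{1/(e√y)}^∞ du/(u²+1), and consequently this integral tends to 0 as y → 0⁺. -/
/-!
Write `f_y(t) = y / ((t² + y²) log (1/t))`. On `(0, e⁻¹]` we have `log (1/t) ≥ 1`, and on the
shorter interval `(0, √y e⁻¹]` even `log (1/t) ≥ 1 + ½ log (1/y)`. Dividing the Poisson-type kernel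
`y / (t² + y²)` (whose primitive is `arctan (t / y)`) by these lower bounds, the first piece
contributes at most `π / (2 (1 + ½ log (1/y)))` and the second at most
`arctan (e⁻¹ / y) - arctan (e⁻¹ / √y) ≤ ∫_{e⁻¹/√y}^∞ du / (u² + 1)`. Both terms tend to `0` as
`y → 0⁺`, and the integral is nonnegative.
-/

open MeasureTheory Filter Real Topology Set

lemma integral_Ioi_one_div_sq_add_one (x : ℝ) :
    ∫ u in Ioi x, 1 / (u ^ 2 + 1) = π / 2 - arctan x := by
  simp_rw [one_div, add_comm _ (1 : ℝ)]
  exact integral_Ioi_inv_one_add_sq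

lemma tendsto_integral_Ioi_one_div_sq_add_one_atTop :
    Tendsto (fun x : ℝ => ∫ u in Ioi x, 1 / (u ^ 2 + 1)) atTop (𝓝 0) := by
  simp_rw [integral_Ioi_one_div_sq_add_one]
  simpa using (tendsto_const_nhds (x := π / 2)).sub
    (tendsto_arctan_atTop.mono_right nhdsWithin_le_nhds)

section KernelOverLowerBound

variable {y a b L : ℝ} {g : ℝ → ℝ}

lemma continuous_div_sq_add_sq (hy : y ≠ 0) : Continuous fun t : ℝ => y / (t ^ 2 + y ^ 2) :=
  continuous_const.div (by fun_prop) fun t => by positivity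

lemma div_sq_add_sq_mul_le_div (t : ℝ) (hy : 0 < y) (hL : 0 < L) (hg : L ≤ g t) :
    y / ((t ^ 2 + y ^ 2) * g t) ≤ y / (t ^ 2 + y ^ 2) / L := by
  rw [div_div]
  exact div_le_div_of_nonneg_left hy.le (by positivity)
    (mul_le_mul_of_nonneg_left hg (by positivity))

lemma integrableOn_Ioc_div_sq_add_sq_mul (hy : 0 < y) (hL : 0 < L) (hgm : Measurable g)
    (hg : ∀ t ∈ Ioc a b, L ≤ g t) :
    IntegrableOn (fun t => y / ((t ^ 2 + y ^ 2) * g t)) (Ioc a b) := by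
  refine ((continuous_div_sq_add_sq hy.ne').div_const L).integrableOn_Ioc.mono' (by fun_prop : Measurable _).aestronglyMeasurable ?_
  filter_upwards [ae_restrict_mem measurableSet_Ioc] with t ht
  have hgt : 0 < g t := hL.trans_le (hg t ht)
  rw [norm_of_nonneg (by positivity)]
  exact div_sq_add_sq_mul_le_div t hy hL (hg t ht)

lemma setIntegral_Ioc_div_sq_add_sq_mul_le (hy : 0 < y) (hab : a ≤ b) (hL : 0 < L)
    (hg : ∀ t ∈ Ioc a b, L ≤ g t) :
    ∫ t in Ioc a b, y / ((t ^ 2 + y ^ 2) * g t) ≤ (arctan (b / y) - arctan (a / y)) / L := by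
  calc ∫ t in Ioc a b, y / ((t ^ 2 + y ^ 2) * g t)
      ≤ ∫ t in Ioc a b, y / (t ^ 2 + y ^ 2) / L := by
        refine integral_mono_of_nonneg ?_ ?_ ?_
        · filter_upwards [ae_restrict_mem measurableSet_Ioc] with t ht
          have hgt : 0 < g t := hL.trans_le (hg t ht)
          positivity
        · exact ((continuous_div_sq_add_sq hy.ne').div_const L).integrableOn_Ioc
        · filter_upwards [ae_restrict_mem measurableSet_Ioc] with t ht
          exact div_sq_add_sq_mul_le_div t hy hL (hg t ht)
    _ = (arctan (b / y) - arctan (a / y)) / L := by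
        simp_rw [add_comm _ (y ^ 2)]
        rw [integral_div, ← intervalIntegral.integral_of_le hab, integral_div_sq_add_sq]

end KernelOverLowerBound

lemma log_one_div_le_log_one_div {s t : ℝ} (ht : 0 < t) (hts : t ≤ s) :
    log (1 / s) ≤ log (1 / t) :=
  log_le_log (by positivity [ht.trans_le hts]) (one_div_le_one_div_of_le ht hts)

lemma one_le_log_one_div {t : ℝ} (ht : t ∈ Ioc 0 (exp 1)⁻¹) : 1 ≤ log (1 / t) := by
  simpa using log_one_div_le_log_one_div ht.1 ht.2

lemma log_one_div_sqrt_mul_exp_inv {y : ℝ} (hy : 0 < y) :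
    log (1 / (√y * (exp 1)⁻¹)) = 1 + 1 / 2 * log (1 / y) := by
  rw [log_div one_ne_zero (by positivity), log_mul (by positivity) (by positivity),
    log_sqrt hy.le, log_inv, log_exp, log_div one_ne_zero hy.ne', log_one]
  ring

theorem setIntegral_Ioc_exp_inv_le {y : ℝ} (hy : y ∈ Ioo 0 1) :
    (∫ t in Ioc 0 (exp 1)⁻¹, y / ((t ^ 2 + y ^ 2) * log (1 / t)))
      ≤ π / (2 * (1 + 1 / 2 * log (1 / y)))
        + ∫ u in Ioi ((exp 1)⁻¹ / √y), 1 / (u ^ 2 + 1) := by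
  obtain ⟨hy0, hy1⟩ := hy
  set c := (exp 1)⁻¹
  set a := √y * c
  set K := 1 + 1 / 2 * log (1 / y)
  have ha : 0 < a := by positivity
  have hac : a ≤ c := mul_le_of_le_one_left (by positivity) (sqrt_le_one.2 hy1.le)
  have hK : 0 < K := by
    have : 0 < log (1 / y) := log_pos ((one_lt_div hy0).2 hy1)
    positivity
  have hay : a / y = c / √y := by
    rw [div_eq_div_iff hy0.ne' (by positivity), mul_right_comm, mul_self_sqrt hy0.le, mul_comm]
  have hgm : Measurable fun t : ℝ => log (1 / t) := by fun_prop
  have hlog : ∀ t ∈ Ioc a c, 1 ≤ log (1 / t) :=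
    fun t ht => one_le_log_one_div ⟨ha.trans ht.1, ht.2⟩
  have hlogK : ∀ t ∈ Ioc 0 a, K ≤ log (1 / t) := fun t ht =>
    (log_one_div_sqrt_mul_exp_inv hy0).symm.trans_le (log_one_div_le_log_one_div ht.1 ht.2)
  rw [← Ioc_union_Ioc_eq_Ioc ha.le hac, setIntegral_union (Ioc_disjoint_Ioc_of_le le_rfl)
    measurableSet_Ioc (integrableOn_Ioc_div_sq_add_sq_mul hy0 hK hgm hlogK)
    (integrableOn_Ioc_div_sq_add_sq_mul hy0 one_pos hgm hlog), integral_Ioi_one_div_sq_add_one]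
  have hnear := setIntegral_Ioc_div_sq_add_sq_mul_le hy0 ha.le hK hlogK
  have hfar := setIntegral_Ioc_div_sq_add_sq_mul_le hy0 hac one_pos hlog
  rw [zero_div, arctan_zero, sub_zero, hay] at hnear
  rw [div_one, hay] at hfar
  have hnear' : arctan (c / √y) / K ≤ π / (2 * K) := by
    rw [← div_div]
    exact div_le_div_of_nonneg_right (arctan_lt_pi_div_two _).le hK.le
  linarith [arctan_lt_pi_div_two (c / y)]

lemma tendsto_log_one_div_nhdsGT_zero : Tendsto (fun y : ℝ => log (1 / y)) (𝓝[>] 0) atTop := by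
  simp_rw [one_div, log_inv]
  exact tendsto_neg_atBot_atTop.comp tendsto_log_nhdsGT_zero

lemma tendsto_div_sqrt_nhdsGT_zero {c : ℝ} (hc : 0 < c) :
    Tendsto (fun y : ℝ => c / √y) (𝓝[>] 0) atTop := by
  simp_rw [div_eq_mul_inv, ← sqrt_inv]
  exact (tendsto_sqrt_atTop.comp tendsto_inv_nhdsGT_zero).const_mul_atTop hc

theorem integral_bound_and_limit :
    (∀ y ∈ Set.Ioo (0 : ℝ) 1,
      (∫ t in Set.Ioc (0 : ℝ) (Real.exp 1)⁻¹,
          y / ((t ^ 2 + y ^ 2) * Real.log (1 / t)))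
        ≤ Real.pi / (2 * (1 + (1 / 2) * Real.log (1 / y)))
          + ∫ u in Set.Ioi ((Real.exp 1)⁻¹ / Real.sqrt y), 1 / (u ^ 2 + 1)) ∧
    Tendsto (fun y : ℝ =>
        ∫ t in Set.Ioc (0 : ℝ) (Real.exp 1)⁻¹,
          y / ((t ^ 2 + y ^ 2) * Real.log (1 / t)))
      (nhdsWithin 0 (Set.Ioi 0)) (nhds 0) := by
  refine ⟨fun y hy => setIntegral_Ioc_exp_inv_le hy, ?_⟩
  have hbound : Tendsto (fun y : ℝ => π / (2 * (1 + 1 / 2 * log (1 / y)))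
      + ∫ u in Ioi ((exp 1)⁻¹ / √y), 1 / (u ^ 2 + 1)) (𝓝[>] 0) (𝓝 0) := by
    have hden : Tendsto (fun y : ℝ => 2 * (1 + 1 / 2 * log (1 / y))) (𝓝[>] 0) atTop :=
      (tendsto_atTop_add_const_left _ 1
        (tendsto_log_one_div_nhdsGT_zero.const_mul_atTop one_half_pos)).const_mul_atTop two_pos
    simpa using (tendsto_const_nhds.div_atTop hden).add
      (tendsto_integral_Ioi_one_div_sq_add_one_atTop.comp
        (tendsto_div_sqrt_nhdsGT_zero (by positivity)))
  refine tendsto_of_tendsto_of_tendsto_of_le_of_le' tendsto_const_nhds hbound ?_ ?_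
  · filter_upwards [self_mem_nhdsWithin] with y (hy : 0 < y)
    refine setIntegral_nonneg measurableSet_Ioc fun t ht => ?_
    have := one_le_log_one_div ht
    positivity
  · filter_upwards [Ioo_mem_nhdsGT one_pos] with y hy
    exact setIntegral_Ioc_exp_inv_le hy
end
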